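/- If W is a Hermitian operator on C^m ⊗ C^m with tr(Wπ) ≤ 1 for all separable states π, then for any density matrix σ, −tr(Wσ) ≤ R(σ) whenever in addition tr(Wπ) ≥ 0 for all separable π. That is, every normalized entanglement witness gives a lower bound on the robustness of entanglement. -/

import Mathlib

open scoped BigOperators Matrix ComplexOrder

noncomputable section

/-- The pure product state |a⟩⟨a| ⊗ |b⟩⟨b| as a matrix on the bipartite index type. -/
def prodState {α β : Type*} [Fintype α] [Fintype β] (a : α → ℂ) (b : β → ℂ) :
    Matrix (α × β) (α × β) ℂ :=
  fun x y => (a x.1 * star (a y.1)) * (b x.2 * star (b y.2))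

/-- A bipartite matrix is separable if it is a convex combination of pure product states. -/
def SepState {α β : Type*} [Fintype α] [Fintype β]
    (σ : Matrix (α × β) (α × β) ℂ) : Prop :=
  ∃ (k : ℕ) (p : Fin k → ℝ) (a : Fin k → α → ℂ) (b : Fin k → β → ℂ),
    (∀ i, 0 ≤ p i) ∧ (∑ i, p i = 1) ∧
    (∀ i, ∑ x, ‖a i x‖ ^ 2 = 1) ∧ (∀ i, ∑ x, ‖b i x‖ ^ 2 = 1) ∧
    σ = ∑ i, ((p i : ℂ)) • prodState (a i) (b i)

/-- A density matrix: positive semidefinite with unit trace. -/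
def IsDensity {n : Type*} [Fintype n] [DecidableEq n] (σ : Matrix n n ℂ) : Prop :=
  σ.PosSemidef ∧ σ.trace = 1

/-- The robustness of entanglement: the least s ≥ 0 such that mixing σ with some
separable state π with weights 1/(1+s), s/(1+s) yields a separable state. -/
def robustness {α β : Type*} [Fintype α] [Fintype β] [DecidableEq α] [DecidableEq β]
    (σ : Matrix (α × β) (α × β) ℂ) : ℝ :=
  sInf { s : ℝ | 0 ≤ s ∧ ∃ π : Matrix (α × β) (α × β) ℂ, SepState π ∧
    SepState ((((1 + s)⁻¹ : ℝ) : ℂ) • σ + (((s / (1 + s)) : ℝ) : ℂ) • π) }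

/-!
If `(1 + s)⁻¹ σ + s (1 + s)⁻¹ π` is separable, the witness gives `tr(Wσ) + s tr(Wπ) ≥ 0`, and
`tr(Wπ) ≤ 1` turns this into `-tr(Wσ) ≤ s`. The real content is that the set defining `R(σ)` is
nonempty, so that its infimum is not the junk value `sInf ∅ = 0`. Polarization over the fourth
roots of unity shows that the pure states span all matrices on each factor, hence Kronecker
products of them, the pure product states, span all bipartite matrices. A Hermitian `σ` of unit
trace is then a real affine combination `∑ rᵢ ρᵢ` of pure product states, and `s = ∑ max (-rᵢ) 0`
with `π` the normalized negative part works.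
-/

open Matrix Complex ComplexConjugate Submodule Kronecker

lemma vecMulVec_polarization {α : Type*} (a b : α → ℂ) :
    ∑ t ∈ Finset.range 4, (I ^ t) • vecMulVec (a + I ^ t • b) (star (a + I ^ t • b))
      = (4 : ℂ) • vecMulVec a (star b) := by
  ext x y
  simp only [Finset.sum_range_succ, Finset.sum_range_zero, Matrix.add_apply, Matrix.smul_apply,
    vecMulVec_apply, Pi.add_apply, Pi.smul_apply, Pi.star_apply, star_add, star_smul,
    smul_eq_mul, star_pow, Complex.star_def, Complex.conj_I, Matrix.zero_apply]
  linear_combination (b x * conj (b y) * (-I ^ 7 + I ^ 5 + I ^ 4 - I ^ 3 - I ^ 2 + 1)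
    + b x * conj (a y) * (I ^ 4 + 1) + a x * conj (b y) * (-I ^ 4 + 2 * I ^ 2 - 3)
    + a x * conj (a y) * (I + 1)) * I_sq

lemma mem_span_real_of_isSelfAdjoint {E : Type*} [AddCommGroup E] [Module ℂ E] [StarAddMonoid E]
    [StarModule ℂ E] {S : Set E} (hS : ∀ s ∈ S, IsSelfAdjoint s) {x : E}
    (hx : x ∈ span ℂ S) (hxS : IsSelfAdjoint x) : x ∈ span ℝ S := by
  obtain ⟨n, c, s, rfl⟩ := mem_span_set'.1 hx
  have hre : ∑ i, c i • (s i : E) = ∑ i, (c i).re • (s i : E) := by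
    calc ∑ i, c i • (s i : E)
        = (2 : ℂ)⁻¹ • (∑ i, c i • (s i : E) + star (∑ i, c i • (s i : E))) := by
          rw [hxS.star_eq, ← two_smul ℂ, smul_smul, inv_mul_cancel₀ two_ne_zero, one_smul]
      _ = ∑ i, (c i).re • (s i : E) := by
          simp only [star_sum, star_smul, (hS _ (s _).2).star_eq, ← Finset.sum_add_distrib,
            ← add_smul, Finset.smul_sum, smul_smul, ← Complex.coe_smul]
          refine Finset.sum_congr rfl fun i _ => ?_
          rw [Complex.star_def, Complex.add_conj]
          congr 1
          push_cast
          ring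
  rw [hre]
  exact sum_mem fun i _ => smul_mem _ _ (subset_span (s i).2)

lemma exists_mix_mem_convexHull {E ι : Type*} [AddCommGroup E] [Module ℝ E] [Fintype ι]
    {S : Set E} {r : ι → ℝ} {z : ι → E} (hr : ∑ i, r i = 1) (hz : ∀ i, z i ∈ S) :
    ∃ s : ℝ, 0 ≤ s ∧ ∃ π ∈ convexHull ℝ S,
      (1 + s)⁻¹ • ∑ i, r i • z i + (s / (1 + s)) • π ∈ convexHull ℝ S := by
  have hull (w : ι → ℝ) (hw₀ : ∀ i, 0 ≤ w i) (hw₁ : ∑ i, w i = 1) :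
      ∑ i, w i • z i ∈ convexHull ℝ S :=
    mem_convexHull_of_exists_fintype w z hw₀ hw₁ hz rfl
  set N := ∑ i, max (-r i) 0
  have hsplit (i : ι) : max (r i) 0 = r i + max (-r i) 0 := by
    linarith [max_zero_sub_max_neg_zero_eq_self (r i)]
  have hN₀ : 0 ≤ N := Finset.sum_nonneg fun i _ => le_max_right _ _
  rcases hN₀.eq_or_lt with hN | hN
  · have hr₀ (i : ι) : 0 ≤ r i := by
      simpa using (Finset.sum_eq_zero_iff_of_nonneg fun i _ => le_max_right (-r i) 0).1 hN.symm
        i (Finset.mem_univ i)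
    refine ⟨0, le_rfl, _, hull r hr₀ hr, ?_⟩
    simpa using hull r hr₀ hr
  · refine ⟨N, hN₀, ∑ i, (max (-r i) 0 / N) • z i,
      hull _ (fun i => by positivity) (by rw [← Finset.sum_div, div_self hN.ne']), ?_⟩
    have hmix : (1 + N)⁻¹ • ∑ i, r i • z i + (N / (1 + N)) • ∑ i, (max (-r i) 0 / N) • z i
        = ∑ i, (max (r i) 0 / (1 + N)) • z i := by
      simp only [Finset.smul_sum, smul_smul, ← Finset.sum_add_distrib, ← add_smul]
      refine Finset.sum_congr rfl fun i _ => congrArg (· • z i) ?_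
      rw [hsplit]
      field_simp
    rw [hmix]
    refine hull _ (fun i => by positivity) ?_
    rw [← Finset.sum_div, div_eq_one_iff_eq (by positivity),
      Finset.sum_congr rfl fun i _ => hsplit i, Finset.sum_add_distrib, hr]

lemma re_trace_mul_ofReal_smul_add {n : Type*} [Fintype n] (W A B : Matrix n n ℂ) (s t : ℝ) :
    (W * ((s : ℂ) • A + (t : ℂ) • B)).trace.re = s * (W * A).trace.re + t * (W * B).trace.re := by
  simp [Matrix.mul_add, trace_add, trace_smul]

lemma neg_le_of_nonneg_mix {x y s : ℝ} (hs : 0 ≤ s) (hy : y ≤ 1)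
    (hmix : 0 ≤ (1 + s)⁻¹ * x + s / (1 + s) * y) : -x ≤ s := by
  have hsum : 0 ≤ x + s * y := by
    have hpos : 0 < 1 + s := by linarith
    have : (1 + s)⁻¹ * x + s / (1 + s) * y = (1 + s)⁻¹ * (x + s * y) := by ring
    exact nonneg_of_mul_nonneg_right (this ▸ hmix) (inv_pos.2 hpos)
  nlinarith [mul_le_mul_of_nonneg_left hy hs]

section

variable {α β : Type*} [Fintype α] [Fintype β]

variable (α) in
def pureStates : Set (Matrix α α ℂ) :=
  {ρ | ∃ a : α → ℂ, ∑ x, ‖a x‖ ^ 2 = 1 ∧ vecMulVec a (star a) = ρ}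

lemma vecMulVec_star_self_mem_span_pureStates (a : α → ℂ) :
    vecMulVec a (star a) ∈ span ℂ (pureStates α) := by
  set c := ∑ x, ‖a x‖ ^ 2
  rcases (show 0 ≤ c by positivity).eq_or_lt with hc | hc
  · have ha : a = 0 := funext fun x => by
      simpa using (Finset.sum_eq_zero_iff_of_nonneg (fun x _ => by positivity)).1 hc.symm x
        (Finset.mem_univ x)
    simp [ha]
  · set u : α → ℂ := (√c)⁻¹ • a
    have hu : ∑ x, ‖u x‖ ^ 2 = 1 := by
      simp only [u, Pi.smul_apply, norm_smul, mul_pow, ← Finset.mul_sum, Real.norm_eq_abs,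
        abs_inv, sq_abs, inv_pow, Real.sq_sqrt hc.le]
      exact inv_mul_cancel₀ hc.ne'
    have hau : vecMulVec a (star a) = (c : ℂ) • vecMulVec u (star u) := by
      ext x y
      simp only [u, vecMulVec_apply, Matrix.smul_apply, Pi.star_apply, Pi.smul_apply, star_smul,
        ← Complex.coe_smul, smul_eq_mul, Complex.star_def, Complex.conj_ofReal]
      have hsqrt : ((√c : ℝ) : ℂ) ^ 2 = c := by exact_mod_cast Real.sq_sqrt hc.le
      have hsqrt0 : ((√c : ℝ) : ℂ) ≠ 0 := by exact_mod_cast (Real.sqrt_pos.2 hc).ne'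
      push_cast
      field_simp
      linear_combination (a x * conj (a y)) * hsqrt
    rw [hau]
    exact smul_mem _ _ (subset_span ⟨u, hu, rfl⟩)

lemma vecMulVec_mem_span_pureStates (a b : α → ℂ) :
    vecMulVec a (star b) ∈ span ℂ (pureStates α) := by
  have h := vecMulVec_polarization a b
  rw [← inv_smul_eq_iff₀ (four_ne_zero' ℂ)] at h
  rw [← h]
  exact smul_mem _ _ (sum_mem fun t _ =>
    smul_mem _ _ (vecMulVec_star_self_mem_span_pureStates _))

lemma span_pureStates [DecidableEq α] : span ℂ (pureStates α) = ⊤ := by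
  refine eq_top_iff'.2 fun M => ?_
  rw [matrix_eq_sum_single M]
  refine sum_mem fun i _ => sum_mem fun j _ => ?_
  have hj : (Pi.single j 1 : α → ℂ) = star (Pi.single j 1) := by simp [Pi.star_single]
  rw [← mul_one (M i j), ← smul_eq_mul, ← smul_single, single_eq_single_vecMulVec_single, hj]
  exact smul_mem _ _ (vecMulVec_mem_span_pureStates _ _)

variable (α β) in
def pureProductStates : Set (Matrix (α × β) (α × β) ℂ) :=
  {ρ | ∃ a b, ∑ x, ‖a x‖ ^ 2 = 1 ∧ ∑ y, ‖b y‖ ^ 2 = 1 ∧ prodState a b = ρ}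

lemma prodState_eq_kronecker (a : α → ℂ) (b : β → ℂ) :
    prodState a b = vecMulVec a (star a) ⊗ₖ vecMulVec b (star b) := rfl

lemma span_pureProductStates [DecidableEq α] [DecidableEq β] :
    span ℂ (pureProductStates α β) = ⊤ := by
  have himage : Set.image2 (fun (A : Matrix α α ℂ) (B : Matrix β β ℂ) =>
      kroneckerBilinear (R := ℂ) A B) (pureStates α) (pureStates β) ⊆ pureProductStates α β := by
    rintro _ ⟨_, ⟨a, ha, rfl⟩, _, ⟨b, hb, rfl⟩, rfl⟩
    exact ⟨a, b, ha, hb, rfl⟩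
  have hkron (A : Matrix α α ℂ) (B : Matrix β β ℂ) :
      A ⊗ₖ B ∈ span ℂ (pureProductStates α β) := by
    refine span_mono himage ?_
    rw [← map₂_span_span, span_pureStates, span_pureStates]
    exact apply_mem_map₂ _ mem_top mem_top
  refine eq_top_iff'.2 fun M => ?_
  rw [matrix_eq_sum_single M]
  refine sum_mem fun i _ => sum_mem fun j _ => ?_
  rw [← mul_one (M i j), ← single_kronecker_single]
  exact hkron _ _

lemma trace_vecMulVec_star_self (v : α → ℂ) :
    (vecMulVec v (star v)).trace = ((∑ x, ‖v x‖ ^ 2 : ℝ) : ℂ) := by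
  simp [trace_vecMulVec, dotProduct, Complex.mul_conj']

lemma trace_prodState {a : α → ℂ} {b : β → ℂ}
    (ha : ∑ x, ‖a x‖ ^ 2 = 1) (hb : ∑ y, ‖b y‖ ^ 2 = 1) : (prodState a b).trace = 1 := by
  rw [prodState_eq_kronecker, trace_kronecker, trace_vecMulVec_star_self,
    trace_vecMulVec_star_self, ha, hb, Complex.ofReal_one, one_mul]

lemma isHermitian_prodState (a : α → ℂ) (b : β → ℂ) : (prodState a b).IsHermitian := by
  ext x y
  simp only [conjTranspose_apply, prodState, star_mul', star_star]
  ring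

lemma sepState_of_mem_convexHull {σ : Matrix (α × β) (α × β) ℂ}
    (hσ : σ ∈ convexHull ℝ (pureProductStates α β)) : SepState σ := by
  obtain ⟨ι, _, w, z, hw₀, hw₁, hz, rfl⟩ := mem_convexHull_iff_exists_fintype.1 hσ
  choose a b ha hb hab using hz
  let e := (Fintype.equivFin ι).symm
  refine ⟨Fintype.card ι, w ∘ e, a ∘ e, b ∘ e, fun _ => hw₀ _, ?_, fun _ => ha _,
    fun _ => hb _, ?_⟩
  · rwa [Function.comp_def, e.sum_comp w]
  · simp only [Function.comp_apply, Complex.coe_smul, hab]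
    exact (e.sum_comp fun i => w i • z i).symm

lemma trace_of_mem_pureProductStates {ρ : Matrix (α × β) (α × β) ℂ}
    (hρ : ρ ∈ pureProductStates α β) : ρ.trace = 1 := by
  obtain ⟨a, b, ha, hb, rfl⟩ := hρ
  exact trace_prodState ha hb

lemma exists_sum_pureProductStates_of_isHermitian [DecidableEq α] [DecidableEq β]
    {σ : Matrix (α × β) (α × β) ℂ} (hσ : σ.IsHermitian) :
    ∃ (n : ℕ) (r : Fin n → ℝ) (ρ : Fin n → pureProductStates α β),
      ∑ i, r i • (ρ i : Matrix (α × β) (α × β) ℂ) = σ := by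
  refine mem_span_set'.1 (mem_span_real_of_isSelfAdjoint ?_ ?_ hσ)
  · rintro _ ⟨a, b, -, -, rfl⟩
    exact isHermitian_prodState a b
  · rw [span_pureProductStates]
    exact mem_top

lemma robustness_set_nonempty [DecidableEq α] [DecidableEq β] {σ : Matrix (α × β) (α × β) ℂ}
    (hσ : σ.IsHermitian) (htr : σ.trace = 1) :
    {s : ℝ | 0 ≤ s ∧ ∃ π : Matrix (α × β) (α × β) ℂ, SepState π ∧
      SepState ((((1 + s)⁻¹ : ℝ) : ℂ) • σ + (((s / (1 + s)) : ℝ) : ℂ) • π)}.Nonempty := by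
  obtain ⟨n, r, ρ, rfl⟩ := exists_sum_pureProductStates_of_isHermitian hσ
  have hr : ∑ i, r i = 1 := by
    simp only [trace_sum, trace_smul, trace_of_mem_pureProductStates (ρ _).2, Complex.real_smul,
      mul_one] at htr
    exact_mod_cast htr
  obtain ⟨s, hs, π, hπ, hmix⟩ := exists_mix_mem_convexHull hr fun i => (ρ i).2
  refine ⟨s, hs, π, sepState_of_mem_convexHull hπ, ?_⟩
  simpa only [Complex.coe_smul] using sepState_of_mem_convexHull hmix

end

theorem witness_lower_bound_general {m : ℕ} (σ W : Matrix (Fin m × Fin m) (Fin m × Fin m) ℂ) (hσ : IsDensity σ)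
    (hup : ∀ π : Matrix (Fin m × Fin m) (Fin m × Fin m) ℂ, SepState π → (W * π).trace.re ≤ 1)
    (hlo : ∀ π : Matrix (Fin m × Fin m) (Fin m × Fin m) ℂ, SepState π → 0 ≤ (W * π).trace.re) :
    -(W * σ).trace.re ≤ robustness σ := by
  refine le_csInf (robustness_set_nonempty hσ.1.isHermitian hσ.2) ?_
  rintro s ⟨hs, π, hπ, hmix⟩
  have hW := hlo _ hmix
  rw [re_trace_mul_ofReal_smul_add] at hW
  exact neg_le_of_nonneg_mix hs (hup π hπ) hW

/-- Every normalized entanglement witness lower bounds the robustness of entanglement. -/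
theorem witness_lower_bound {m : ℕ} (σ W : Matrix (Fin m × Fin m) (Fin m × Fin m) ℂ) (hσ : IsDensity σ)
    (hW : W.IsHermitian)
    (hup : ∀ π : Matrix (Fin m × Fin m) (Fin m × Fin m) ℂ, SepState π → (W * π).trace.re ≤ 1)
    (hlo : ∀ π : Matrix (Fin m × Fin m) (Fin m × Fin m) ℂ, SepState π → 0 ≤ (W * π).trace.re) :
    -(W * σ).trace.re ≤ robustness σ :=
  witness_lower_bound_general σ W hσ hup hlo

end
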